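/- Fix a privacy parameter ε > 0 and positive integers d ≥ k ≥ 1, and let t ∈ [−1,1]. Let X be distributed according to the Piecewise Mechanism with privacy budget ε/k on input t, and let T equal (d/k)·X with probability k/d and 0 with probability 1 − k/d (the selection independent of X). Then Var[T] = d·(e^{ε/(2k)}+3)/(3k·(e^{ε/(2k)}−1)²) + ( d·e^{ε/(2k)}/(k·(e^{ε/(2k)}−1)) − 1 )·t². -/

import Mathlib

/-!
With `e = exp(ε'/2)` the density is the constant `(e-1)/(2e(e+1))` on `[-C, C]` plus the
constant `(e-1)²/(2e)` on `[ℓ(t), r(t)] = [(et-1)/(e-1), (et+1)/(e-1)]`, so its first two moments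
are integrals of polynomials over intervals: `E X = t` and `E X² = t² e/(e-1) + (e+3)/(3(e-1)²)`.
For a `0/1`-valued `S` independent of `X` we have `(S X)² = S X²`, hence
`Var (S X) = E S · E X² - (E S · E X)²`; scaling by `d/k` with `E S = k/d` gives the formula
with `ε' = ε/k`.
-/

open Real MeasureTheory ProbabilityTheory

/-- `C` parameter of the Piecewise Mechanism. -/
noncomputable def pmC (ε : ℝ) : ℝ := (exp (ε / 2) + 1) / (exp (ε / 2) - 1)

/-- density value `p` of the Piecewise Mechanism. -/
noncomputable def pmP (ε : ℝ) : ℝ := (exp ε - exp (ε / 2)) / (2 * exp (ε / 2) + 2)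

/-- left endpoint `ℓ(t)` of the center piece. -/
noncomputable def pmL (ε t : ℝ) : ℝ := (pmC ε + 1) / 2 * t - (pmC ε - 1) / 2

/-- right endpoint `r(t)` of the center piece. -/
noncomputable def pmR (ε t : ℝ) : ℝ := pmL ε t + pmC ε - 1

/-- output probability density of the Piecewise Mechanism. -/
noncomputable def pmPdf (ε t x : ℝ) : ℝ :=
  if pmL ε t ≤ x ∧ x ≤ pmR ε t then pmP ε
  else if -pmC ε ≤ x ∧ x ≤ pmC ε then pmP ε / exp ε
  else 0

lemma integrable_mul_indicator_const {f : ℝ → ℝ} {a b : ℝ}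
    (hf : IntegrableOn f (Set.Icc a b)) (s : ℝ) :
    Integrable (fun x => f x * (Set.Icc a b).indicator (fun _ => s) x) := by
  simp_rw [← Set.indicator_mul_right]
  exact (integrable_indicator_iff measurableSet_Icc).mpr (hf.mul_const s)

lemma integral_mul_indicator_const (f : ℝ → ℝ) {a b : ℝ} (hab : a ≤ b) (s : ℝ) :
    ∫ x, f x * (Set.Icc a b).indicator (fun _ => s) x = s * ∫ x in a..b, f x := by
  simp_rw [← Set.indicator_mul_right]
  rw [integral_indicator measurableSet_Icc, integral_Icc_eq_integral_Ioc,
    ← intervalIntegral.integral_of_le hab, intervalIntegral.integral_mul_const, mul_comm]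

lemma one_lt_exp_half {ε : ℝ} (hε : 0 < ε) : 1 < exp (ε / 2) :=
  one_lt_exp_iff.mpr (half_pos hε)

lemma exp_eq_exp_half_sq (ε : ℝ) : exp ε = exp (ε / 2) ^ 2 := by
  rw [sq, ← exp_add, add_halves]

section PiecewiseMechanism

lemma measurable_pmPdf (ε t : ℝ) : Measurable (pmPdf ε t) :=
  Measurable.ite measurableSet_Icc measurable_const
    (Measurable.ite measurableSet_Icc measurable_const measurable_const)

lemma pmP_div_exp_eq (ε : ℝ) :
    pmP ε / exp ε = (exp (ε / 2) - 1) / (2 * exp (ε / 2) * (exp (ε / 2) + 1)) := by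
  have : exp (ε / 2) ≠ 0 := (exp_pos _).ne'
  rw [pmP, exp_eq_exp_half_sq]
  field_simp

lemma pmP_sub_pmP_div_exp_eq (ε : ℝ) :
    pmP ε - pmP ε / exp ε = (exp (ε / 2) - 1) ^ 2 / (2 * exp (ε / 2)) := by
  have : exp (ε / 2) ≠ 0 := (exp_pos _).ne'
  rw [pmP_div_exp_eq, pmP, exp_eq_exp_half_sq]
  field_simp
  ring

variable {ε : ℝ} (hε : 0 < ε)
include hε

lemma one_lt_pmC : 1 < pmC ε := by
  have he := one_lt_exp_half hε
  rw [pmC, one_lt_div (by linarith)]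
  linarith

lemma pmL_eq (t : ℝ) : pmL ε t = (exp (ε / 2) * t - 1) / (exp (ε / 2) - 1) := by
  have : exp (ε / 2) - 1 ≠ 0 := (sub_pos.mpr (one_lt_exp_half hε)).ne'
  simp only [pmL, pmC]
  field_simp
  ring

lemma pmR_eq (t : ℝ) : pmR ε t = (exp (ε / 2) * t + 1) / (exp (ε / 2) - 1) := by
  have : exp (ε / 2) - 1 ≠ 0 := (sub_pos.mpr (one_lt_exp_half hε)).ne'
  rw [pmR, pmL_eq hε, pmC]
  field_simp
  ring

lemma pmL_le_pmR (t : ℝ) : pmL ε t ≤ pmR ε t := by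
  have := one_lt_pmC hε
  rw [pmR]
  linarith

lemma pmP_nonneg : 0 ≤ pmP ε := by
  have he := one_lt_exp_half hε
  rw [pmP, exp_eq_exp_half_sq]
  have : 0 ≤ exp (ε / 2) ^ 2 - exp (ε / 2) := by nlinarith
  positivity

lemma pmPdf_nonneg (t x : ℝ) : 0 ≤ pmPdf ε t x := by
  have := pmP_nonneg hε
  unfold pmPdf
  split_ifs <;> positivity

variable {t : ℝ} (ht : t ∈ Set.Icc (-1 : ℝ) 1)
include ht

lemma neg_pmC_le_pmL : -pmC ε ≤ pmL ε t := by
  have := one_lt_pmC hε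
  rw [pmL]
  nlinarith [ht.1]

lemma pmR_le_pmC : pmR ε t ≤ pmC ε := by
  have := one_lt_pmC hε
  rw [pmR, pmL]
  nlinarith [ht.2]

lemma pmPdf_eq_indicator_add_indicator :
    pmPdf ε t = (Set.Icc (-pmC ε) (pmC ε)).indicator (fun _ => pmP ε / exp ε)
      + (Set.Icc (pmL ε t) (pmR ε t)).indicator (fun _ => pmP ε - pmP ε / exp ε) := by
  ext x
  have hl := neg_pmC_le_pmL hε ht
  have hr := pmR_le_pmC hε ht
  simp only [pmPdf, Pi.add_apply, Set.indicator_apply, Set.mem_Icc]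
  split_ifs with hc hw hw
  · ring
  · exact absurd ⟨hl.trans hc.1, hc.2.trans hr⟩ hw
  · ring
  · ring

lemma integrable_mul_pmPdf {f : ℝ → ℝ} (hf : Continuous f) :
    Integrable (fun x => f x * pmPdf ε t x) := by
  simp_rw [pmPdf_eq_indicator_add_indicator hε ht, Pi.add_apply, mul_add]
  exact (integrable_mul_indicator_const hf.integrableOn_Icc _).add
    (integrable_mul_indicator_const hf.integrableOn_Icc _)

lemma integral_mul_pmPdf {f : ℝ → ℝ} (hf : Continuous f) :
    ∫ x, f x * pmPdf ε t x = pmP ε / exp ε * (∫ x in -pmC ε..pmC ε, f x)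
      + (pmP ε - pmP ε / exp ε) * ∫ x in pmL ε t..pmR ε t, f x := by
  simp_rw [pmPdf_eq_indicator_add_indicator hε ht, Pi.add_apply, mul_add]
  rw [integral_add (integrable_mul_indicator_const hf.integrableOn_Icc _)
      (integrable_mul_indicator_const hf.integrableOn_Icc _),
    integral_mul_indicator_const f (by linarith [one_lt_pmC hε]),
    integral_mul_indicator_const f (pmL_le_pmR hε t)]

lemma integral_id_mul_pmPdf : ∫ x, x * pmPdf ε t x = t := by
  have : exp (ε / 2) - 1 ≠ 0 := (sub_pos.mpr (one_lt_exp_half hε)).ne'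
  rw [integral_mul_pmPdf hε ht continuous_id', integral_id, integral_id, pmP_sub_pmP_div_exp_eq,
    pmP_div_exp_eq, pmL_eq hε, pmR_eq hε]
  field_simp
  ring

lemma integral_sq_mul_pmPdf :
    ∫ x, x ^ 2 * pmPdf ε t x = t ^ 2 * exp (ε / 2) / (exp (ε / 2) - 1)
      + (exp (ε / 2) + 3) / (3 * (exp (ε / 2) - 1) ^ 2) := by
  have : exp (ε / 2) - 1 ≠ 0 := (sub_pos.mpr (one_lt_exp_half hε)).ne'
  rw [integral_mul_pmPdf hε ht (continuous_pow 2), integral_pow, integral_pow,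
    pmP_sub_pmP_div_exp_eq, pmP_div_exp_eq, pmL_eq hε, pmR_eq hε, pmC]
  norm_num only
  field_simp
  ring

end PiecewiseMechanism

section LawWithDensity

variable {Ω : Type*} [MeasurableSpace Ω] {μ : Measure Ω} {X : Ω → ℝ} {f : ℝ → ℝ}
  (hX : AEMeasurable X μ) (hf : Measurable f) (hf0 : ∀ x, 0 ≤ f x)
  (hlaw : μ.map X = volume.withDensity (fun x => ENNReal.ofReal (f x)))
include hX hf hf0 hlaw

lemma integral_comp_eq_integral_mul_of_map_eq_withDensity (g : ℝ → ℝ) (hg : Measurable g) :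
    ∫ ω, g (X ω) ∂μ = ∫ x, g x * f x := by
  rw [← integral_map hX hg.aestronglyMeasurable, hlaw,
    integral_withDensity_eq_integral_toReal_smul hf.ennreal_ofReal
      (ae_of_all _ fun _ => ENNReal.ofReal_lt_top)]
  congr with x
  rw [ENNReal.toReal_ofReal (hf0 x), smul_eq_mul, mul_comm]

lemma integrable_comp_iff_of_map_eq_withDensity {g : ℝ → ℝ} (hg : Measurable g) :
    Integrable (fun ω => g (X ω)) μ ↔ Integrable (fun x => g x * f x) := by
  rw [← Function.comp_def, ← integrable_map_measure hg.aestronglyMeasurable hX, hlaw,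
    integrable_withDensity_iff hf.ennreal_ofReal (ae_of_all _ fun _ => ENNReal.ofReal_lt_top)]
  simp_rw [ENNReal.toReal_ofReal (hf0 _)]

end LawWithDensity

section Sampling

variable {Ω : Type*} [MeasurableSpace Ω] {μ : Measure Ω} {S X : Ω → ℝ}
  (hS01 : ∀ ω, S ω = 0 ∨ S ω = 1)
include hS01

lemma integral_eq_measureReal_of_forall_eq_zero_or_one (hS : Measurable S) :
    ∫ ω, S ω ∂μ = μ.real {ω | S ω = 1} := by
  have hind : S = {ω | S ω = 1}.indicator (fun _ => 1) := by
    ext ω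
    rcases hS01 ω with h | h <;> simp [h]
  have hmeas : MeasurableSet {ω | S ω = 1} := hS (measurableSet_singleton 1)
  conv_lhs => rw [hind]
  rw [integral_indicator_const 1 hmeas, smul_eq_mul, mul_one]

lemma variance_mul_of_indepFun_of_forall_eq_zero_or_one [IsProbabilityMeasure μ]
    (hS : AEStronglyMeasurable S μ) (hX : MemLp X 2 μ) (hSX : IndepFun S X μ) :
    variance (fun ω => S ω * X ω) μ
      = μ[S] * μ[fun ω => X ω ^ 2] - (μ[S] * μ[X]) ^ 2 := by
  change variance (S * X) μ = _
  have hSX2 : IndepFun S (fun ω => X ω ^ 2) μ :=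
    hSX.comp measurable_id (measurable_id.pow_const 2)
  have hmem : MemLp (S * X) 2 μ :=
    hX.mono (hS.mul hX.1) (ae_of_all _ fun ω => by rcases hS01 ω with h | h <;> simp [h])
  have hsq : (S * X) ^ 2 = S * fun ω => X ω ^ 2 := by
    ext ω
    rcases hS01 ω with h | h <;> simp [h]
  rw [variance_eq_sub hmem, hsq, hSX2.integral_mul_eq_mul_integral hS (hX.1.pow 2),
    hSX.integral_mul_eq_mul_integral hS hX.1]

end Sampling

/-- Variance of the sampled-and-scaled report of one attribute perturbed by the
Piecewise Mechanism with budget `ε/k`: if `X` is distributed per the PM density,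
`S` is an independent Bernoulli indicator with success probability `k/d`, and
`T = (d/k)·S·X`, then
`Var[T] = d(e^{ε/(2k)}+3)/(3k(e^{ε/(2k)}−1)²) + (d·e^{ε/(2k)}/(k(e^{ε/(2k)}−1)) − 1)·t²`. -/
theorem stmt_16 {Ω : Type*} [MeasureSpace Ω] [IsProbabilityMeasure (ℙ : Measure Ω)]
    (ε : ℝ) (hε : 0 < ε) (d k : ℕ) (hk : 1 ≤ k) (hkd : k ≤ d)
    (t : ℝ) (ht : t ∈ Set.Icc (-1 : ℝ) 1)
    (X S : Ω → ℝ) (hXmeas : Measurable X)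
    (hXlaw : Measure.map X ℙ =
      volume.withDensity (fun x => ENNReal.ofReal (pmPdf (ε / k) t x)))
    (hS01 : ∀ ω, S ω = 0 ∨ S ω = 1) (hSmeas : Measurable S)
    (hSp : ℙ {ω | S ω = 1} = ENNReal.ofReal ((k : ℝ) / d))
    (hindep : IndepFun S X ℙ)
    (T : Ω → ℝ) (hT : T = fun ω => ((d : ℝ) / k) * S ω * X ω) :
    variance T ℙ =
      (d : ℝ) * (exp (ε / (2 * k)) + 3) / (3 * k * (exp (ε / (2 * k)) - 1) ^ 2) +
        ((d : ℝ) * exp (ε / (2 * k)) / (k * (exp (ε / (2 * k)) - 1)) - 1) * t ^ 2 := by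
  have hk0 : (0 : ℝ) < k := by exact_mod_cast hk
  have hd0 : (0 : ℝ) < d := by exact_mod_cast hk.trans hkd
  have hε' : 0 < ε / k := div_pos hε hk0
  have hE := integral_comp_eq_integral_mul_of_map_eq_withDensity hXmeas.aemeasurable
    (measurable_pmPdf _ t) (pmPdf_nonneg hε' t) hXlaw
  have hX2 : MemLp X 2 ℙ := (memLp_two_iff_integrable_sq hXmeas.aestronglyMeasurable).mpr <|
    (integrable_comp_iff_of_map_eq_withDensity hXmeas.aemeasurable (measurable_pmPdf _ t)
      (pmPdf_nonneg hε' t) hXlaw (measurable_id.pow_const 2)).mpr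
      (integrable_mul_pmPdf hε' ht (continuous_pow 2))
  have hEX : ∫ ω, X ω = t := (hE _ measurable_id).trans (integral_id_mul_pmPdf hε' ht)
  have hEX2 := (hE (fun x => x ^ 2) (measurable_id.pow_const 2)).trans
    (integral_sq_mul_pmPdf hε' ht)
  have hES : ∫ ω, S ω = k / d := by
    rw [integral_eq_measureReal_of_forall_eq_zero_or_one hS01 hSmeas, measureReal_def, hSp,
      ENNReal.toReal_ofReal (by positivity)]
  have hT' : T = fun ω => (d / k : ℝ) * (S ω * X ω) := by simp_rw [hT, mul_assoc]
  have he : exp (ε / k / 2) - 1 ≠ 0 := (sub_pos.mpr (one_lt_exp_half hε')).ne'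
  rw [hT', variance_const_mul, variance_mul_of_indepFun_of_forall_eq_zero_or_one hS01
    hSmeas.aestronglyMeasurable hX2 hindep, hES, hEX, hEX2, show ε / (2 * k) = ε / k / 2 by ring]
  generalize exp (ε / k / 2) = e at he ⊢
  field_simp
  ring
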